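/- Let ν > 1, N ∈ ℕ, and let v̄, h : ℤ² → ℂ with v̄_m = 0 for all m outside I^{2N} = {m : |m₁| ≤ 2N, |m₂| ≤ 2N}, h_m = 0 for all m ∈ I^N, and ∑_m |h_m| ν^{max(|m₁|,|m₂|)} ≤ 1. Then for every n ∈ I^N, |(v̄ * h)_n| ≤ ν^{-(N+1)} · max{|v̄_k| : k ∈ ℤ², k ≠ 0}. -/
import Mathlib


/-- Tail estimate for the `Z₁` bound: the convolution of a sequence `v` supported in
`I^{2N}` with a sequence `h` vanishing on `I^N` of weighted `ℓ¹` norm at most 1 is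
bounded on `I^N` by `ν^{-(N+1)}` times the sup of `‖v‖` over nonzero indices. -/
theorem stmt_17 (ν : ℝ) (hν : 1 < ν) (N : ℕ) (v h : ℤ × ℤ → ℂ)
    (hv : ∀ m : ℤ × ℤ, ¬(|m.1| ≤ 2 * (N : ℤ) ∧ |m.2| ≤ 2 * (N : ℤ)) → v m = 0)
    (hh : ∀ m : ℤ × ℤ, |m.1| ≤ (N : ℤ) ∧ |m.2| ≤ (N : ℤ) → h m = 0)
    (hs : Summable fun m : ℤ × ℤ => ‖h m‖ * ν ^ max |m.1| |m.2|)
    (hb : ∑' m : ℤ × ℤ, ‖h m‖ * ν ^ max |m.1| |m.2| ≤ 1) :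
    ∀ n : ℤ × ℤ, |n.1| ≤ (N : ℤ) ∧ |n.2| ≤ (N : ℤ) →
      ‖∑' m : ℤ × ℤ, v (n - m) * h m‖
        ≤ ν ^ (-((N : ℤ) + 1)) * ⨆ k : {k : ℤ × ℤ // k ≠ 0}, ‖v k.1‖ := by
  intro n hn
  have hν0 : (0:ℝ) < ν := lt_trans one_pos hν
  set M := ⨆ k : {k : ℤ × ℤ // k ≠ 0}, ‖v k.1‖ with hM
  -- boundedness of the sup
  have hfin : (Set.range fun k : {k : ℤ × ℤ // k ≠ 0} => ‖v k.1‖).Finite := by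
    apply Set.Finite.subset
      (Set.Finite.insert 0 ((Set.finite_Icc ((-(2*(N:ℤ))), (-(2*(N:ℤ)))) (2*(N:ℤ), 2*(N:ℤ))).image
        fun k => ‖v k‖))
    rintro x ⟨k, rfl⟩
    by_cases hk : v k.1 = 0
    · left; simp [hk]
    · right
      refine ⟨k.1, ?_, rfl⟩
      have h1 : |(k.1:ℤ×ℤ).1| ≤ 2*(N:ℤ) ∧ |(k.1:ℤ×ℤ).2| ≤ 2*(N:ℤ) := by
        by_contra hc; exact hk (hv _ hc)
      obtain ⟨ha, hb'⟩ := h1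
      rw [abs_le] at ha hb'
      exact Set.mem_Icc.2 ⟨⟨ha.1, hb'.1⟩, ⟨ha.2, hb'.2⟩⟩
  have hbdd : BddAbove (Set.range fun k : {k : ℤ × ℤ // k ≠ 0} => ‖v k.1‖) :=
    hfin.bddAbove
  have hMk : ∀ k : ℤ × ℤ, k ≠ 0 → ‖v k‖ ≤ M := fun k hk => le_ciSup hbdd ⟨k, hk⟩
  have hM0 : 0 ≤ M :=
    le_trans (norm_nonneg (v (1,1))) (hMk (1,1) (by simp [Prod.ext_iff]))
  have hc0 : (0:ℝ) ≤ ν ^ (-((N : ℤ) + 1)) := le_of_lt (zpow_pos hν0 _)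
  -- termwise bound
  have hterm : ∀ m : ℤ × ℤ, ‖v (n - m) * h m‖
      ≤ M * (ν ^ (-((N : ℤ) + 1)) * (‖h m‖ * ν ^ max |m.1| |m.2|)) := by
    intro m
    by_cases hm : h m = 0
    · simp [hm]
    · have hmI : ¬(|m.1| ≤ (N : ℤ) ∧ |m.2| ≤ (N : ℤ)) := fun hc => hm (hh m hc)
      have hne : n - m ≠ 0 := by
        intro hnm
        exact hmI (by rw [sub_eq_zero] at hnm; exact hnm ▸ hn)
      have hmax : (N : ℤ) + 1 ≤ max |m.1| |m.2| := by
        rcases not_and_or.1 hmI with h1 | h1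
        · exact le_max_of_le_left (by omega)
        · exact le_max_of_le_right (by omega)
      have hge : (1:ℝ) ≤ ν ^ (-((N : ℤ) + 1)) * ν ^ max |m.1| |m.2| := by
        rw [← zpow_add₀ (ne_of_gt hν0)]
        exact one_le_zpow₀ (le_of_lt hν) (by omega)
      calc ‖v (n - m) * h m‖ = ‖v (n - m)‖ * ‖h m‖ := norm_mul _ _
        _ ≤ M * ‖h m‖ := by
            exact mul_le_mul_of_nonneg_right (hMk _ hne) (norm_nonneg _)
        _ = M * (‖h m‖ * 1) := by ring
        _ ≤ M * (‖h m‖ * (ν ^ (-((N : ℤ) + 1)) * ν ^ max |m.1| |m.2|)) := by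
            apply mul_le_mul_of_nonneg_left _ hM0
            exact mul_le_mul_of_nonneg_left hge (norm_nonneg _)
        _ = M * (ν ^ (-((N : ℤ) + 1)) * (‖h m‖ * ν ^ max |m.1| |m.2|)) := by ring
  have hgs : Summable fun m : ℤ × ℤ =>
      M * (ν ^ (-((N : ℤ) + 1)) * (‖h m‖ * ν ^ max |m.1| |m.2|)) :=
    (hs.mul_left _).mul_left _
  calc ‖∑' m : ℤ × ℤ, v (n - m) * h m‖
      ≤ ∑' m : ℤ × ℤ, M * (ν ^ (-((N : ℤ) + 1)) * (‖h m‖ * ν ^ max |m.1| |m.2|)) :=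
        tsum_of_norm_bounded hgs.hasSum hterm
    _ = M * (ν ^ (-((N : ℤ) + 1)) * ∑' m : ℤ × ℤ, ‖h m‖ * ν ^ max |m.1| |m.2|) := by
        rw [tsum_mul_left, tsum_mul_left]
    _ ≤ M * (ν ^ (-((N : ℤ) + 1)) * 1) := by
        apply mul_le_mul_of_nonneg_left _ hM0
        exact mul_le_mul_of_nonneg_left hb hc0
    _ = ν ^ (-((N : ℤ) + 1)) * M := by ring
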